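/- For each n ∈ ℕ, let φ_n : ℝ → ℝ be the 2·3^n-periodic function equal to σ on (−3^n, 3^n]. Then each φ_n is bounded, continuous on ℝ ∖ ℤ, periodic with period 2·3^n, and the sequence (φ_n) converges uniformly to σ on ℝ; more precisely, sup_{x ∈ ℝ} |σ(x) − φ_n(x)| ≤ Σ_{k=n+1}^∞ 1/k² for every n. -/

import Mathlib

open Filter Topology

noncomputable section

/-- The defining properties of the function `σ` of Section 3 of the paper:
`σ = −1` on `(−1,0]`, `σ = 1` on `(0,1]`, and for every `n ≥ 0`,
`σ(x) = σ(x + 2·3^n) − 1/(n+1)²` on `(−3^{n+1}, −3^n]` and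
`σ(x) = σ(x − 2·3^n) + 1/(n+1)²` on `(3^n, 3^{n+1}]`.
These conditions determine `σ` uniquely on all of `ℝ`. -/
def SigmaSpec (σ : ℝ → ℝ) : Prop :=
  (∀ x : ℝ, -1 < x → x ≤ 0 → σ x = -1) ∧
  (∀ x : ℝ, 0 < x → x ≤ 1 → σ x = 1) ∧
  (∀ (n : ℕ) (x : ℝ), -(3 : ℝ) ^ (n + 1) < x → x ≤ -(3 : ℝ) ^ n →
    σ x = σ (x + 2 * 3 ^ n) - 1 / ((n : ℝ) + 1) ^ 2) ∧
  (∀ (n : ℕ) (x : ℝ), (3 : ℝ) ^ n < x → x ≤ (3 : ℝ) ^ (n + 1) →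
    σ x = σ (x - 2 * 3 ^ n) + 1 / ((n : ℝ) + 1) ^ 2)
/-- The `2·3^n`-periodic extension of `σ` restricted to `(−3^n, 3^n]`: the point
`x` is reduced to the interval `(−3^n, 3^n]` by subtracting the appropriate integer
multiple of `2·3^n`. -/
def phiExt (σ : ℝ → ℝ) (n : ℕ) (x : ℝ) : ℝ :=
  σ (x - 2 * 3 ^ n * (⌈(x - 3 ^ n) / (2 * 3 ^ n)⌉ : ℤ))

namespace PhiAux

variable {σ : ℝ → ℝ}

lemma exists_shell (x : ℝ) (n0 : ℕ) : ∃ j : ℕ, -(3:ℝ)^(n0+j) < x ∧ x ≤ (3:ℝ)^(n0+j) := by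
  obtain ⟨m, hm⟩ := pow_unbounded_of_one_lt |x| (by norm_num : (1:ℝ) < 3)
  have h3 : (3:ℝ)^m ≤ (3:ℝ)^(n0+m) := pow_le_pow_right₀ (by norm_num) (Nat.le_add_left m n0)
  cases' abs_lt.mp hm with h1 h2
  exact ⟨m, by linarith, by linarith⟩
  
lemma sigma_eq_ceil_shell (hσ : SigmaSpec σ) :
    ∀ n : ℕ, ∀ x : ℝ, -(3:ℝ)^n < x → x ≤ (3:ℝ)^n → σ x = σ ((⌈x⌉ : ℤ) : ℝ) := by
  intro n
  induction n with
  | zero =>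
    intro x h1 h2
    simp only [pow_zero] at h1 h2
    rcases le_or_gt x 0 with h0 | h0
    · have hc : ⌈x⌉ = 0 := Int.ceil_eq_zero_iff.mpr ⟨h1, h0⟩
      rw [hc, hσ.1 x h1 h0]
      push_cast
      rw [hσ.1 0 (by norm_num) le_rfl]
    · have hc : ⌈x⌉ = 1 := Int.ceil_eq_iff.mpr ⟨by push_cast; linarith, by push_cast; linarith⟩
      rw [hc, hσ.2.1 x h0 h2]
      push_cast
      rw [hσ.2.1 1 (by norm_num) le_rfl]
  | succ n ih =>
    intro x h1 h2
    have hp : (3:ℝ)^(n+1) = 3 * 3^n := by rw [pow_succ]; ring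
    rcases lt_or_ge ((3:ℝ)^n) x with hpos | hle
    · -- positive outer shell
      have hx' : σ x = σ (x - 2*3^n) + 1/((n:ℝ)+1)^2 := hσ.2.2.2 n x hpos h2
      have hm1 : -(3:ℝ)^n < x - 2*3^n := by linarith
      have hm2 : x - 2*3^n ≤ (3:ℝ)^n := by linarith
      have hceil : ⌈x - 2*3^n⌉ = ⌈x⌉ - 2*3^n := by
        have : x - 2*3^n = x - ((2*3^n : ℤ) : ℝ) := by push_cast; ring
        rw [this, Int.ceil_sub_intCast]
      have hc1 : (3:ℝ)^n < ((⌈x⌉:ℤ):ℝ) := lt_of_lt_of_le hpos (Int.le_ceil x)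
      have hc2 : ((⌈x⌉:ℤ):ℝ) ≤ (3:ℝ)^(n+1) := by
        have : x ≤ (((3^(n+1) : ℤ)):ℝ) := by push_cast; linarith
        have := Int.ceil_le.mpr this
        calc ((⌈x⌉:ℤ):ℝ) ≤ (((3^(n+1):ℤ)):ℝ) := by exact_mod_cast this
          _ = (3:ℝ)^(n+1) := by push_cast; ring
      have hx2' : σ ((⌈x⌉:ℤ):ℝ) = σ (((⌈x⌉:ℤ):ℝ) - 2*3^n) + 1/((n:ℝ)+1)^2 :=
        hσ.2.2.2 n _ hc1 hc2
      rw [hx', ih (x - 2*3^n) hm1 hm2, hceil, hx2']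
      congr 2
      push_cast
      ring
    · rcases lt_or_ge (-(3:ℝ)^n) x with hin | hneg
      · exact ih x hin hle
      · -- negative outer shell
        have hx' : σ x = σ (x + 2*3^n) - 1/((n:ℝ)+1)^2 := hσ.2.2.1 n x h1 hneg
        have hm1 : -(3:ℝ)^n < x + 2*3^n := by linarith
        have hm2 : x + 2*3^n ≤ (3:ℝ)^n := by linarith
        have hceil : ⌈x + 2*3^n⌉ = ⌈x⌉ + 2*3^n := by
          have : x + 2*3^n = x + ((2*3^n : ℤ) : ℝ) := by push_cast; ring
          rw [this, Int.ceil_add_intCast]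
        have hc2 : ((⌈x⌉:ℤ):ℝ) ≤ -(3:ℝ)^n := by
          have : x ≤ (((-(3^n) : ℤ)):ℝ) := by push_cast; linarith
          have := Int.ceil_le.mpr this
          calc ((⌈x⌉:ℤ):ℝ) ≤ (((-(3^n):ℤ)):ℝ) := by exact_mod_cast this
            _ = -(3:ℝ)^n := by push_cast; ring
        have hc1 : -(3:ℝ)^(n+1) < ((⌈x⌉:ℤ):ℝ) := lt_of_lt_of_le h1 (Int.le_ceil x)
        have hx2' : σ ((⌈x⌉:ℤ):ℝ) = σ (((⌈x⌉:ℤ):ℝ) + 2*3^n) - 1/((n:ℝ)+1)^2 :=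
          hσ.2.2.1 n _ hc1 hc2
        rw [hx', ih (x + 2*3^n) hm1 hm2, hceil, hx2']
        congr 2
        push_cast
        ring

lemma sigma_eq_ceil (hσ : SigmaSpec σ) (x : ℝ) : σ x = σ ((⌈x⌉ : ℤ) : ℝ) := by
  obtain ⟨j, h1, h2⟩ := exists_shell x 0
  exact sigma_eq_ceil_shell hσ (0+j) x h1 h2


lemma hd_pos (n : ℕ) : (0:ℝ) < 2 * 3^n := by positivity

lemma red_mem (n : ℕ) (x : ℝ) :
    -(3:ℝ)^n < x - 2*3^n*(⌈(x - 3^n)/(2*3^n)⌉ : ℤ) ∧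
      x - 2*3^n*(⌈(x - 3^n)/(2*3^n)⌉ : ℤ) ≤ (3:ℝ)^n := by
  have hd := hd_pos n
  set c : ℤ := ⌈(x - 3^n)/(2*3^n)⌉ with hc
  have h1 : x - 3^n ≤ (c:ℝ) * (2*3^n) := (div_le_iff₀ hd).mp (Int.le_ceil _)
  have h2 : ((c:ℝ)) < (x - 3^n)/(2*3^n) + 1 := Int.ceil_lt_add_one _
  have h2' : ((c:ℝ) - 1) * (2*3^n) < x - 3^n := by
    have := (lt_div_iff₀ hd).mp (by linarith : (c:ℝ) - 1 < (x - 3^n)/(2*3^n))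
    linarith
  constructor <;> nlinarith

lemma phi_eq_inner (σ : ℝ → ℝ) (n : ℕ) (x : ℝ) (h1 : -(3:ℝ)^n < x) (h2 : x ≤ (3:ℝ)^n) :
    phiExt σ n x = σ x := by
  have hd := hd_pos n
  have hc : ⌈(x - 3^n)/(2*3^n)⌉ = 0 := by
    refine Int.ceil_eq_zero_iff.mpr ⟨?_, ?_⟩
    · exact (lt_div_iff₀ hd).mpr (by nlinarith)
    · exact (div_le_iff₀ hd).mpr (by nlinarith)
  simp [phiExt, hc]

lemma phi_periodic (σ : ℝ → ℝ) (n : ℕ) : Function.Periodic (phiExt σ n) (2 * 3^n) := by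
  intro x
  have hd := hd_pos n
  have h1 : (x + 2*3^n - 3^n)/(2*3^n) = (x - 3^n)/(2*3^n) + 1 := by field_simp; ring
  simp only [phiExt, h1, Int.ceil_add_one]
  congr 1
  push_cast
  ring

lemma phi_periodic' (σ : ℝ → ℝ) (n j : ℕ) (y : ℝ) :
    phiExt σ n (y + 2 * 3^(n+j)) = phiExt σ n y := by
  have h := (phi_periodic σ n).nat_mul (3^j) y
  have he : ((3^j : ℕ) : ℝ) * (2 * 3^n) = 2 * 3^(n+j) := by push_cast [pow_add]; ring
  rw [he] at h
  exact h

lemma summable_aux : Summable (fun k : ℕ => 1/((k:ℝ)+1)^2) := by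
  have h := Real.summable_one_div_nat_pow.mpr (by norm_num : 1 < 2)
  have h2 := (summable_nat_add_iff 1).mpr h
  exact h2.congr (fun k => by push_cast; ring)

lemma summable_shift (n : ℕ) : Summable (fun k : ℕ => 1/((k:ℝ)+(n:ℝ)+1)^2) := by
  have h2 := (summable_nat_add_iff n).mpr summable_aux
  exact h2.congr (fun k => by push_cast; ring)

lemma sigma_abs_shell (hσ : SigmaSpec σ) :
    ∀ n : ℕ, ∀ x : ℝ, -(3:ℝ)^n < x → x ≤ (3:ℝ)^n →
      |σ x| ≤ 1 + ∑ k ∈ Finset.range n, 1/((k:ℝ)+1)^2 := by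
  intro n
  induction n with
  | zero =>
    intro x h1 h2
    simp only [pow_zero] at h1 h2
    simp only [Finset.range_zero, Finset.sum_empty, add_zero]
    rcases le_or_gt x 0 with h0 | h0
    · rw [hσ.1 x h1 h0]; norm_num
    · rw [hσ.2.1 x h0 h2]; norm_num
  | succ n ih =>
    intro x h1 h2
    have hp : (3:ℝ)^(n+1) = 3 * 3^n := by rw [pow_succ]; ring
    have hterm : (0:ℝ) ≤ 1/((n:ℝ)+1)^2 := by positivity
    rw [Finset.sum_range_succ]
    rcases lt_or_ge ((3:ℝ)^n) x with hpos | hle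
    · rw [hσ.2.2.2 n x hpos h2]
      have := ih (x - 2*3^n) (by linarith) (by linarith)
      calc |σ (x - 2*3^n) + 1/((n:ℝ)+1)^2| ≤ |σ (x - 2*3^n)| + |1/((n:ℝ)+1)^2| := abs_add_le _ _
        _ ≤ (1 + ∑ k ∈ Finset.range n, 1/((k:ℝ)+1)^2) + 1/((n:ℝ)+1)^2 := by
            rw [abs_of_nonneg hterm]; linarith
        _ = _ := by ring
    · rcases lt_or_ge (-(3:ℝ)^n) x with hin | hneg
      · have := ih x hin hle
        linarith
      · rw [hσ.2.2.1 n x h1 hneg]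
        have := ih (x + 2*3^n) (by linarith) (by linarith)
        calc |σ (x + 2*3^n) - 1/((n:ℝ)+1)^2| ≤ |σ (x + 2*3^n)| + |1/((n:ℝ)+1)^2| := abs_sub _ _
          _ ≤ (1 + ∑ k ∈ Finset.range n, 1/((k:ℝ)+1)^2) + 1/((n:ℝ)+1)^2 := by
              rw [abs_of_nonneg hterm]; linarith
          _ = _ := by ring

lemma sigma_abs_le (hσ : SigmaSpec σ) (x : ℝ) :
    |σ x| ≤ 1 + ∑' k : ℕ, 1/((k:ℝ)+1)^2 := by
  obtain ⟨j, h1, h2⟩ := exists_shell x 0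
  refine le_trans (sigma_abs_shell hσ (0+j) x h1 h2) ?_
  gcongr
  exact summable_aux.sum_le_tsum _ (fun i _ => by positivity)

lemma err_shell (hσ : SigmaSpec σ) (n : ℕ) :
    ∀ j : ℕ, ∀ x : ℝ, -(3:ℝ)^(n+j) < x → x ≤ (3:ℝ)^(n+j) →
      |σ x - phiExt σ n x| ≤ ∑ k ∈ Finset.range j, 1/((k:ℝ)+(n:ℝ)+1)^2 := by
  intro j
  induction j with
  | zero =>
    intro x h1 h2
    rw [phi_eq_inner σ n x h1 h2]
    simp
  | succ j ih =>
    intro x h1 h2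
    have hN : n + (j+1) = (n+j) + 1 := rfl
    rw [hN] at h1 h2
    have hp : (3:ℝ)^((n+j)+1) = 3 * 3^(n+j) := by rw [pow_succ]; ring
    have hterm : (0:ℝ) ≤ 1/((j:ℝ)+(n:ℝ)+1)^2 := by positivity
    have hcast : 1/((((n+j:ℕ)):ℝ)+1)^2 = 1/((j:ℝ)+(n:ℝ)+1)^2 := by push_cast; ring_nf
    rw [Finset.sum_range_succ]
    rcases lt_or_ge ((3:ℝ)^(n+j)) x with hpos | hle
    · have hσx : σ x = σ (x - 2*3^(n+j)) + 1/((((n+j:ℕ)):ℝ)+1)^2 := hσ.2.2.2 (n+j) x hpos h2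
      have hφx : phiExt σ n x = phiExt σ n (x - 2*3^(n+j)) := by
        have := phi_periodic' σ n j (x - 2*3^(n+j))
        rw [sub_add_cancel] at this
        exact this
      have hb := ih (x - 2*3^(n+j)) (by linarith) (by linarith)
      rw [hσx, hφx, hcast]
      calc |σ (x - 2*3^(n+j)) + 1/((j:ℝ)+(n:ℝ)+1)^2 - phiExt σ n (x - 2*3^(n+j))|
          ≤ |σ (x - 2*3^(n+j)) - phiExt σ n (x - 2*3^(n+j))| + |1/((j:ℝ)+(n:ℝ)+1)^2| := by
            rw [show σ (x - 2*3^(n+j)) + 1/((j:ℝ)+(n:ℝ)+1)^2 - phiExt σ n (x - 2*3^(n+j))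
              = (σ (x - 2*3^(n+j)) - phiExt σ n (x - 2*3^(n+j))) + 1/((j:ℝ)+(n:ℝ)+1)^2 by ring]
            exact abs_add_le _ _
        _ ≤ _ := by rw [abs_of_nonneg hterm]; gcongr
    · rcases lt_or_ge (-(3:ℝ)^(n+j)) x with hin | hneg
      · refine le_trans (ih x hin hle) ?_
        have := hterm
        linarith
      · have hσx : σ x = σ (x + 2*3^(n+j)) - 1/((((n+j:ℕ)):ℝ)+1)^2 := hσ.2.2.1 (n+j) x h1 hneg
        have hφx : phiExt σ n x = phiExt σ n (x + 2*3^(n+j)) := (phi_periodic' σ n j x).symm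
        have hb := ih (x + 2*3^(n+j)) (by linarith) (by linarith)
        rw [hσx, hφx, hcast]
        calc |σ (x + 2*3^(n+j)) - 1/((j:ℝ)+(n:ℝ)+1)^2 - phiExt σ n (x + 2*3^(n+j))|
            ≤ |σ (x + 2*3^(n+j)) - phiExt σ n (x + 2*3^(n+j))| + |1/((j:ℝ)+(n:ℝ)+1)^2| := by
              rw [show σ (x + 2*3^(n+j)) - 1/((j:ℝ)+(n:ℝ)+1)^2 - phiExt σ n (x + 2*3^(n+j))
                = (σ (x + 2*3^(n+j)) - phiExt σ n (x + 2*3^(n+j))) - 1/((j:ℝ)+(n:ℝ)+1)^2 by ring]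
              exact abs_sub _ _
          _ ≤ _ := by rw [abs_of_nonneg hterm]; gcongr

lemma err_bound (hσ : SigmaSpec σ) (n : ℕ) (x : ℝ) :
    |σ x - phiExt σ n x| ≤ ∑' k : ℕ, 1/((k:ℝ)+(n:ℝ)+1)^2 := by
  obtain ⟨j, h1, h2⟩ := exists_shell x n
  refine le_trans (err_shell hσ n j x h1 h2) ?_
  exact (summable_shift n).sum_le_tsum _ (fun i _ => by positivity)


lemma ceil_arg_const (n : ℕ) (m : ℤ) (x : ℝ) (h1 : (m:ℝ) < x) (h2 : x ≤ (m:ℝ) + 1) :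
    ⌈(x - 3^n)/(2*3^n)⌉ = ⌈((m:ℝ) + 1 - 3^n)/(2*3^n)⌉ := by
  have hd := hd_pos n
  set c : ℤ := ⌈((m:ℝ) + 1 - 3^n)/(2*3^n)⌉ with hc
  refine le_antisymm (Int.ceil_le_ceil (by gcongr <;> linarith)) ?_
  have h3 : ((c:ℝ)) < ((m:ℝ) + 1 - 3^n)/(2*3^n) + 1 := Int.ceil_lt_add_one _
  have h4 : ((c:ℝ) - 1) * (2*3^n) < (m:ℝ) + 1 - 3^n := by
    have := (lt_div_iff₀ hd).mp (by linarith : (c:ℝ) - 1 < ((m:ℝ)+1-3^n)/(2*3^n))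
    linarith
  set N : ℤ := 2*3^n*(c-1) + 3^n with hN
  have hNr : (N:ℝ) = 2*3^n*((c:ℝ)-1) + 3^n := by rw [hN]; push_cast; ring
  have hNm : N ≤ m := by
    have : (N:ℝ) < (m:ℝ) + 1 := by rw [hNr]; nlinarith
    exact_mod_cast Int.lt_add_one_iff.mp (by exact_mod_cast this)
  have hNx : (N:ℝ) < x := lt_of_le_of_lt (by exact_mod_cast hNm) h1
  have h5 : ((c - 1 : ℤ):ℝ) < (x - 3^n)/(2*3^n) := by
    rw [lt_div_iff₀ hd]
    rw [hNr] at hNx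
    push_cast
    nlinarith
  have := Int.lt_ceil.mpr h5
  omega

lemma phi_half_open (hσ : SigmaSpec σ) (n : ℕ) (m : ℤ) (x y : ℝ)
    (hx : x ∈ Set.Ioc (m:ℝ) ((m:ℝ)+1)) (hy : y ∈ Set.Ioc (m:ℝ) ((m:ℝ)+1)) :
    phiExt σ n x = phiExt σ n y := by
  have hcx := ceil_arg_const n m x hx.1 hx.2
  have hcy := ceil_arg_const n m y hy.1 hy.2
  set c : ℤ := ⌈((m:ℝ) + 1 - 3^n)/(2*3^n)⌉ with hc
  have key : ∀ z : ℝ, z ∈ Set.Ioc (m:ℝ) ((m:ℝ)+1) → ⌈z - 2*3^n*(c:ℝ)⌉ = m + 1 - 2*3^n*c := by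
    intro z hz
    have hz1 : ⌈z⌉ = m + 1 := Int.ceil_eq_iff.mpr ⟨by push_cast; linarith [hz.1], by push_cast; linarith [hz.2]⟩
    have : z - 2*3^n*(c:ℝ) = z - (((2*3^n*c : ℤ)):ℝ) := by push_cast; ring
    rw [this, Int.ceil_sub_intCast, hz1]
  unfold phiExt
  rw [hcx, hcy]
  rw [sigma_eq_ceil hσ (x - 2*3^n*(c:ℝ)), sigma_eq_ceil hσ (y - 2*3^n*(c:ℝ)),
    key x hx, key y hy]

lemma phi_contOn (hσ : SigmaSpec σ) (n : ℕ) :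
    ContinuousOn (phiExt σ n) {x : ℝ | ¬ ∃ m : ℤ, x = (m : ℝ)} := by
  intro x hx
  have hne : ∀ m : ℤ, x ≠ (m:ℝ) := by
    intro m h
    exact hx ⟨m, h⟩
  set m : ℤ := ⌊x⌋ with hm
  have h1 : (m:ℝ) < x := lt_of_le_of_ne (Int.floor_le x) (Ne.symm (hne m))
  have h2 : x < (m:ℝ) + 1 := Int.lt_floor_add_one x
  have hev : phiExt σ n =ᶠ[𝓝 x] fun _ => phiExt σ n x := by
    filter_upwards [isOpen_Ioo.mem_nhds (⟨h1, h2⟩ : x ∈ Set.Ioo (m:ℝ) ((m:ℝ)+1))] with y hy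
    exact phi_half_open hσ n m y x ⟨hy.1, le_of_lt hy.2⟩ ⟨h1, le_of_lt h2⟩
  exact (Filter.EventuallyEq.continuousAt hev).continuousWithinAt

end PhiAux

/-- **Proposition 3.2.**  Each `φ_n = phiExt σ n` is bounded, continuous on
`ℝ ∖ ℤ`, periodic with period `2·3^n`, coincides with `σ` on `(−3^n, 3^n]`,
satisfies `sup_x |σ x − φ_n x| ≤ Σ_{k=n+1}^∞ 1/k²`, and the sequence `(φ_n)`
converges uniformly to `σ` on `ℝ`. -/
theorem phiExt_approximates_sigma (σ : ℝ → ℝ) (hσ : SigmaSpec σ) :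
    (∀ n : ℕ, ∃ M : ℝ, ∀ x : ℝ, |phiExt σ n x| ≤ M) ∧
    (∀ n : ℕ, ContinuousOn (phiExt σ n) {x : ℝ | ¬ ∃ m : ℤ, x = (m : ℝ)}) ∧
    (∀ n : ℕ, Function.Periodic (phiExt σ n) (2 * 3 ^ n)) ∧
    (∀ (n : ℕ) (x : ℝ), x ∈ Set.Ioc (-(3 : ℝ) ^ n) ((3 : ℝ) ^ n) → phiExt σ n x = σ x) ∧
    (∀ (n : ℕ) (x : ℝ),
      |σ x - phiExt σ n x| ≤ ∑' k : ℕ, 1 / ((k : ℝ) + (n : ℝ) + 1) ^ 2) ∧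
    TendstoUniformly (fun n x => phiExt σ n x) σ atTop := by
  refine ⟨?_, PhiAux.phi_contOn hσ, PhiAux.phi_periodic σ,
    fun n x hx => PhiAux.phi_eq_inner σ n x hx.1 hx.2, PhiAux.err_bound hσ, ?_⟩
  · intro n
    exact ⟨1 + ∑' k : ℕ, 1/((k:ℝ)+1)^2, fun x => PhiAux.sigma_abs_le hσ _⟩
  · rw [Metric.tendstoUniformly_iff]
    intro ε hε
    have ht : Tendsto (fun n : ℕ => ∑' k : ℕ, 1/((k:ℝ)+(n:ℝ)+1)^2) atTop (𝓝 0) := by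
      have h := tendsto_sum_nat_add (fun j : ℕ => 1/((j:ℝ)+1)^2)
      refine h.congr (fun n => tsum_congr (fun k => by push_cast; ring))
    filter_upwards [ht.eventually (gt_mem_nhds hε)] with n hn x
    rw [Real.dist_eq]
    exact lt_of_le_of_lt (PhiAux.err_bound hσ n x) hn
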